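/- Let X be a locally compact non-compact abelian group, let (G,H) be a compact stable Friedrichs X-module over the group X and (E,K) a stable Friedrichs X-module over the group X, with Gelfand triplets G ⊂ H ⊂ G* and E ⊂ K ⊂ E*, so that G, G*, E, E* carry induced Banach X-module structures over the group X. Assume D ∈ B(G,E) is of class C^u(Q;G,E), that a, b ∈ B(E,E*) are of class C^u(Q;E,E*), and that D*aD − z and D*bD − z are bijective maps from G onto G* for some z ∈ ℂ. If a − b ∈ B₀ˡ(E,E*) (with respect to the canonical multiplier algebra of E*), then (Δ_a − z)⁻¹ − (Δ_b − z)⁻¹ is a compact operator on H, where Δ_a and Δ_b are the operators induced in H by D*aD and D*bD; i.e. Δ_b is a compact perturbation of Δ_a. -/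

import Mathlib

open ContinuousLinearMap

noncomputable section

/-- The space of continuous antilinear forms on `G` (the "adjoint space" `G*`). -/
abbrev AntiDual (G : Type*) [NormedAddCommGroup G] [NormedSpace ℂ G] : Type _ :=
  G →SL[starRingEnd ℂ] ℂ

/-- Given a continuous embedding `e : G → H` of a normed space into a Hilbert space,
the canonical map `H → G*`, `v ↦ (u ↦ ⟪e u, v⟫)`. -/
def toAntiDual {G H : Type*} [NormedAddCommGroup G] [NormedSpace ℂ G]
    [NormedAddCommGroup H] [InnerProductSpace ℂ H] (e : G →L[ℂ] H) :
    H →L[ℂ] AntiDual G :=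
  LinearMap.mkContinuous
    { toFun := fun v => ((innerSL ℂ).flip v).comp e
      map_add' := fun v w => by ext u; simp
      map_smul' := fun c v => by ext u; simp }
    ‖e‖ (fun v => by
      have hv : ‖(innerSL ℂ).flip v‖ ≤ ‖v‖ :=
        opNorm_le_bound _ (norm_nonneg v)
          (fun u => by simpa [mul_comm] using norm_inner_le_norm (𝕜 := ℂ) u v)
      calc ‖((innerSL ℂ).flip v).comp e‖ ≤ ‖(innerSL ℂ).flip v‖ * ‖e‖ := opNorm_comp_le _ _
      _ ≤ ‖v‖ * ‖e‖ := by gcongr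
      _ = ‖e‖ * ‖v‖ := mul_comm _ _)

/-- Precomposition with `D : G →L E`, as a map `E* →L G*`; this is the adjoint `D*`. -/
def precompAntiDual {G E : Type*} [NormedAddCommGroup G] [NormedSpace ℂ G]
    [NormedAddCommGroup E] [NormedSpace ℂ E] (D : G →L[ℂ] E) :
    AntiDual E →L[ℂ] AntiDual G :=
  LinearMap.mkContinuous
    { toFun := fun w => w.comp D
      map_add' := fun w₁ w₂ => by ext u; simp
      map_smul' := fun c w => by ext u; simp }
    ‖D‖ (fun w => by
      calc ‖w.comp D‖ ≤ ‖w‖ * ‖D‖ := opNorm_comp_le _ _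
      _ = ‖D‖ * ‖w‖ := mul_comm _ _)

/-- Auxiliary: the antilinear form `u ↦ conj ⟨v, a u⟩`. -/
def adjointFormAux {E : Type*} [NormedAddCommGroup E] [NormedSpace ℂ E]
    (a : E →L[ℂ] AntiDual E) (v : E) : AntiDual E :=
  LinearMap.mkContinuous
    { toFun := fun u => starRingEnd ℂ (a u v)
      map_add' := fun u₁ u₂ => by simp
      map_smul' := fun c u => by simp }
    (‖a‖ * ‖v‖) (fun u => by
      simp only [LinearMap.coe_mk, AddHom.coe_mk]
      calc ‖starRingEnd ℂ (a u v)‖ = ‖a u v‖ := by simp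
      _ ≤ ‖a u‖ * ‖v‖ := (a u).le_opNorm v
      _ ≤ (‖a‖ * ‖u‖) * ‖v‖ := by gcongr; exact a.le_opNorm u
      _ = ‖a‖ * ‖v‖ * ‖u‖ := by ring)

theorem adjointFormAux_norm_le {E : Type*} [NormedAddCommGroup E] [NormedSpace ℂ E]
    (a : E →L[ℂ] AntiDual E) (v : E) : ‖adjointFormAux a v‖ ≤ ‖a‖ * ‖v‖ :=
  LinearMap.mkContinuous_norm_le _ (mul_nonneg (norm_nonneg a) (norm_nonneg v)) _

@[simp] theorem adjointFormAux_apply {E : Type*} [NormedAddCommGroup E] [NormedSpace ℂ E]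
    (a : E →L[ℂ] AntiDual E) (v u : E) :
    adjointFormAux a v u = starRingEnd ℂ (a u v) := rfl

/-- The adjoint form `a* ∈ B(E,E*)` of `a ∈ B(E,E*)`: `⟨u, a* v⟩ = conj ⟨v, a u⟩`. -/
def adjointForm {E : Type*} [NormedAddCommGroup E] [NormedSpace ℂ E]
    (a : E →L[ℂ] AntiDual E) : E →L[ℂ] AntiDual E :=
  LinearMap.mkContinuous
    { toFun := fun v => adjointFormAux a v
      map_add' := fun v w => by ext u; simp
      map_smul' := fun c v => by ext u; simp }
    ‖a‖ (fun v => adjointFormAux_norm_le a v)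

/-- A Banach `X`-module over the group `X`: a strongly continuous representation of the
dual group by bounded invertible operators. -/
structure GroupRep (Xd : Type*) [Monoid Xd] [TopologicalSpace Xd]
    (H : Type*) [NormedAddCommGroup H] [NormedSpace ℂ H] where
  V : Xd →* (H →L[ℂ] H)ˣ
  strong_cont : ∀ u : H, Continuous fun k : Xd => (↑(V k) : H →L[ℂ] H) u

/-- The regularity class `C^u(Q; H, K)`: norm continuity of `k ↦ V_k⁻¹ S V_k`. -/
def CuClass {Xd : Type*} [Monoid Xd] [TopologicalSpace Xd]
    {H K : Type*} [NormedAddCommGroup H] [NormedSpace ℂ H]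
    [NormedAddCommGroup K] [NormedSpace ℂ K]
    (WH : GroupRep Xd H) (WK : GroupRep Xd K) (S : H →L[ℂ] K) : Prop :=
  Continuous fun k : Xd =>
    (↑(WK.V k)⁻¹ : K →L[ℂ] K).comp (S.comp (↑(WH.V k) : H →L[ℂ] H))

/-- `B₀ˡ(H,K)`: the closed linear span of the operators `A ∘ T` with `A` in the multiplier
algebra of `K` and `T ∈ B(H,K)`. -/
def B0l {H K : Type*} [NormedAddCommGroup H] [NormedSpace ℂ H] [NormedAddCommGroup K]
    [NormedSpace ℂ K] (MK : Set (K →L[ℂ] K)) : Set (H →L[ℂ] K) :=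
  closure (↑(Submodule.span ℂ
    {S : H →L[ℂ] K | ∃ A ∈ MK, ∃ T : H →L[ℂ] K, S = A.comp T}) : Set (H →L[ℂ] K))

open MeasureTheory

/-- The canonical multiplier algebra of a Banach `X`-module over the group `X`: the norm
closure of the set of operators `ψ(V) = ∫ ψ(k) V_k dk`, `ψ ∈ L¹` with compact support. -/
def repMult {Xd : Type*} [Monoid Xd] [TopologicalSpace Xd] [MeasurableSpace Xd]
    {H : Type*} [NormedAddCommGroup H] [NormedSpace ℂ H] [CompleteSpace H]
    (W : GroupRep Xd H) (μ : Measure Xd) : Set (H →L[ℂ] H) :=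
  closure {A : H →L[ℂ] H | ∃ ψ : Xd → ℂ, Integrable ψ μ ∧ HasCompactSupport ψ ∧
    ∀ u : H, A u = ∫ k, ψ k • ((↑(W.V k) : H →L[ℂ] H) u) ∂μ}

/-!
By the second resolvent identity, `(Δ_b - z)⁻¹ - (Δ_a - z)⁻¹ = L (a - b) R` with
`L = e (D*bD - z)⁻¹ D*`; as the compact operators form a closed subspace, it suffices that
`L ψ(U)` is compact for every compactly supported `ψ ∈ L¹`, where `U_k = (V_{k⁻¹})*` is the
representation on `E*`. With `S = D*bD - z`, one has `L U_k = W_k e C_k` for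
`C_k = (V_k* S V_k)⁻¹ (V_k⁻¹ D V_k)*`, and `V_k* S V_k = D_k* b_k D_k - z` (by unitarity of `W`)
is norm continuous in `k` because `D` and `b` are of class `C^u`; hence so is `C`. Thus
`L ψ(U) = ∫ ψ(k) W_k e C_k dk`, and freezing `C` on the pieces of a fine measurable partition of
`supp ψ` approximates it in norm by finite sums of the compact operators `φ(W) e C_{k_i}`.
-/

open MeasureTheory Filter Topology Set Function

section AntiDual

variable {G E F : Type*} [NormedAddCommGroup G] [NormedSpace ℂ G]
  [NormedAddCommGroup E] [NormedSpace ℂ E] [NormedAddCommGroup F] [NormedSpace ℂ F]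

@[simp] theorem precompAntiDual_apply (D : G →L[ℂ] E) (w : AntiDual E) (u : G) :
    precompAntiDual D w u = w (D u) := rfl

@[simp] theorem toAntiDual_apply {H : Type*} [NormedAddCommGroup H] [InnerProductSpace ℂ H]
    (e : G →L[ℂ] H) (v : H) (u : G) : toAntiDual e v u = inner ℂ (e u) v := rfl

theorem precompAntiDual_comp (A : E →L[ℂ] F) (B : G →L[ℂ] E) :
    precompAntiDual (A.comp B) = (precompAntiDual B).comp (precompAntiDual A) := rfl

theorem precompAntiDual_id :
    precompAntiDual (ContinuousLinearMap.id ℂ G) = ContinuousLinearMap.id ℂ (AntiDual G) := rfl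

theorem norm_precompAntiDual_le (D : G →L[ℂ] E) : ‖precompAntiDual D‖ ≤ ‖D‖ :=
  LinearMap.mkContinuous_norm_le _ (norm_nonneg _) _

theorem continuous_precompAntiDual :
    Continuous (precompAntiDual : (G →L[ℂ] E) → AntiDual E →L[ℂ] AntiDual G) :=
  AddMonoidHomClass.continuous_of_bound
    (AddMonoidHom.mk' precompAntiDual fun A B => by ext; simp) 1
    fun A => by simpa using norm_precompAntiDual_le A

theorem ContinuousLinearMap.units_apply_inv_apply (u : (E →L[ℂ] E)ˣ) (x : E) :
    (u : E →L[ℂ] E) ((↑u⁻¹ : E →L[ℂ] E) x) = x := by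
  rw [← mul_apply_eq_comp, u.mul_inv, one_apply_eq_self]

theorem isInvertible_coe_unit (u : (G →L[ℂ] G)ˣ) : (u : G →L[ℂ] G).IsInvertible :=
  ⟨ContinuousLinearEquiv.unitsEquiv ℂ G u, rfl⟩

theorem isInvertible_precompAntiDual_unit (u : (G →L[ℂ] G)ˣ) :
    (precompAntiDual (u : G →L[ℂ] G)).IsInvertible :=
  .of_inverse (g := precompAntiDual ↑u⁻¹)
    (by rw [← precompAntiDual_comp, ← mul_def, u.inv_mul, one_def, precompAntiDual_id])
    (by rw [← precompAntiDual_comp, ← mul_def, u.mul_inv, one_def, precompAntiDual_id])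

def divForm (D : G →L[ℂ] E) (a : E →L[ℂ] AntiDual E) : G →L[ℂ] AntiDual G :=
  precompAntiDual D ∘L a ∘L D

theorem precompAntiDual_comp_divForm_comp (D : G →L[ℂ] E) (b : E →L[ℂ] AntiDual E)
    (B : G →L[ℂ] G) (u : (E →L[ℂ] E)ˣ) :
    precompAntiDual B ∘L divForm D b ∘L B =
      divForm ((↑u⁻¹ : E →L[ℂ] E) ∘L D ∘L B)
        (precompAntiDual (u : E →L[ℂ] E) ∘L b ∘L (u : E →L[ℂ] E)) := by
  ext x y
  simp [divForm, units_apply_inv_apply]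

end AntiDual

theorem continuous_apply_of_strongly_continuous {Y P Q : Type*} [TopologicalSpace Y]
    [NormedAddCommGroup P] [NormedSpace ℂ P] [NormedAddCommGroup Q] [NormedSpace ℂ Q]
    {W : Y → P →L[ℂ] Q} (hWcont : ∀ u, Continuous fun k => W k u)
    (hW : ∀ k u, ‖W k u‖ ≤ ‖u‖) {v : Y → P} (hv : Continuous v) :
    Continuous fun k => W k (v k) := by
  refine continuous_iff_continuousAt.2 fun k₀ => ?_
  have hsmall : Tendsto (fun k => W k (v k - v k₀)) (𝓝 k₀) (𝓝 0) :=
    squeeze_zero_norm (fun k => hW k _)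
      (by simpa using (hv.sub (continuous_const (y := v k₀))).norm.tendsto k₀)
  have h := hsmall.add ((hWcont (v k₀)).tendsto k₀)
  simp only [map_sub, sub_add_cancel, zero_add] at h
  exact h

theorem isCompactOperator_of_forall_exists_norm_sub_le {P Q : Type*} [NormedAddCommGroup P]
    [NormedSpace ℂ P] [NormedAddCommGroup Q] [NormedSpace ℂ Q] [CompleteSpace Q]
    {F : P →L[ℂ] Q} (C : ℝ)
    (h : ∀ ε > 0, ∃ T : P →L[ℂ] Q, IsCompactOperator T ∧ ‖F - T‖ ≤ C * ε) :
    IsCompactOperator F := by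
  choose! T hT hFT using h
  refine isCompactOperator_of_tendsto (l := 𝓝[>] (0 : ℝ)) (F := T) ?_
    (eventually_nhdsWithin_of_forall hT)
  rw [tendsto_iff_norm_sub_tendsto_zero]
  refine squeeze_zero' (.of_forall fun _ => norm_nonneg _)
    (eventually_nhdsWithin_of_forall fun ε hε => (norm_sub_rev _ _).trans_le (hFT ε hε)) ?_
  exact ((continuous_const_mul C).tendsto' 0 0 (mul_zero C)).mono_left nhdsWithin_le_nhds

theorem exists_measurable_partition_dist_lt {Xd M : Type*} [TopologicalSpace Xd]
    [MeasurableSpace Xd] [OpensMeasurableSpace Xd] [PseudoMetricSpace M] {S : Set Xd}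
    (hS : IsCompact S) {c : Xd → M} (hc : Continuous c) {ε : ℝ} (hε : 0 < ε) :
    ∃ (n : ℕ) (p : Fin n → Xd) (K : Fin n → Set Xd), (∀ i, MeasurableSet (K i)) ∧
      Pairwise (Disjoint on K) ∧ S ⊆ ⋃ i, K i ∧ ∀ i, ∀ k ∈ K i, dist (c k) (c (p i)) < ε := by
  set U : Xd → Set Xd := fun q => c ⁻¹' Metric.ball (c q) ε
  have hU : ∀ q, IsOpen (U q) := fun q => Metric.isOpen_ball.preimage hc
  obtain ⟨t, -, hSt⟩ :=
    hS.elim_nhds_subcover U fun q _ => (hU q).mem_nhds (Metric.mem_ball_self hε)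
  obtain ⟨n, p, -, hp⟩ := t.finite_toSet.fin_param
  refine ⟨n, p, disjointed (U ∘ p), fun i => ?_, disjoint_disjointed _, ?_,
    fun i k hk => disjointed_subset _ i hk⟩
  · rw [disjointed_eq_inter_compl]
    exact (hU _).measurableSet.inter
      (.iInter fun j => .iInter fun _ => (hU _).measurableSet.compl)
  · rw [iUnion_disjointed]
    intro k hk
    obtain ⟨q, hq, hkq⟩ := mem_iUnion₂.1 (hSt hk)
    obtain ⟨i, rfl⟩ : q ∈ range p := hp ▸ hq
    exact mem_iUnion.2 ⟨i, hkq⟩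

theorem norm_smul_sub_sum_indicator_smul_le {ι α V : Type*} [Fintype ι] [NormedAddCommGroup V]
    [NormedSpace ℂ V] {K : ι → Set α} (hK : Pairwise (Disjoint on K)) {ψ : α → ℂ}
    (hψ : support ψ ⊆ ⋃ i, K i) {x : α → V} {y : ι → α → V} {r : ℝ}
    (hxy : ∀ i, ∀ k ∈ K i, ‖x k - y i k‖ ≤ r) (k : α) :
    ‖ψ k • x k - ∑ i, (K i).indicator ψ k • y i k‖ ≤ ‖ψ k‖ * r := by
  classical
  by_cases hk : ψ k = 0
  · simp [hk, indicator_apply]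
  obtain ⟨i, hi⟩ := mem_iUnion.1 (hψ hk)
  rw [Finset.sum_eq_single i
      (fun j _ hji => by rw [indicator_of_notMem (disjoint_right.1 (hK hji) hi), zero_smul])
      (by simp),
    indicator_of_mem hi, ← smul_sub, norm_smul]
  exact mul_le_mul_of_nonneg_left (hxy i k hi) (norm_nonneg _)

theorem forall_integrable_or_eq_zero {α P Q : Type*} [MeasurableSpace α] {ν : Measure α}
    [NormedAddCommGroup P] [NormedSpace ℂ P] [NormedAddCommGroup Q] [NormedSpace ℂ Q]
    (A : P →L[ℂ] Q) (f : P → α → Q) (hf : ∀ w w', f (w + w') = f w + f w')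
    (hA : ∀ w, A w = ∫ k, f w k ∂ν) : (∀ w, Integrable (f w) ν) ∨ A = 0 := by
  refine or_iff_not_imp_left.2 fun h => ?_
  obtain ⟨w₀, hw₀⟩ := not_forall.1 h
  have hzero (w : P) (hw : ¬Integrable (f w) ν) : A w = 0 := (hA w).trans (integral_undef hw)
  ext w
  by_cases hw : Integrable (f w) ν
  · have hsum : ¬Integrable (f (w + w₀)) ν := fun h' =>
      hw₀ (by simpa [hf] using h'.sub hw)
    simpa [hzero _ hw₀, hzero _ hsum] using (A.map_add w w₀).symm
  · exact hzero w hw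

def integralOps {Xd Q : Type*} [TopologicalSpace Xd] [MeasurableSpace Xd]
    [NormedAddCommGroup Q] [NormedSpace ℂ Q] (μ : Measure Xd) (U : Xd → Q →L[ℂ] Q) :
    Set (Q →L[ℂ] Q) :=
  {A | ∃ ψ : Xd → ℂ, Integrable ψ μ ∧ HasCompactSupport ψ ∧ ∀ w, A w = ∫ k, ψ k • U k w ∂μ}

theorem HasCompactSupport.indicator {α β : Type*} [TopologicalSpace α] [Zero β] {f : α → β}
    (hf : HasCompactSupport f) (s : Set α) : HasCompactSupport (s.indicator f) :=
  hf.mono (support_indicator.trans_subset inter_subset_right)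

section IntegralOperators

variable {Xd : Type*} [TopologicalSpace Xd] [MeasurableSpace Xd] [OpensMeasurableSpace Xd]
  {μ : Measure Xd} {H : Type*} [NormedAddCommGroup H] [NormedSpace ℂ H]

theorem MeasureTheory.Integrable.smul_continuous_of_hasCompactSupport {ψ : Xd → ℂ}
    (hψ : Integrable ψ μ) (hcs : HasCompactSupport ψ) {g : Xd → H} (hg : Continuous g) :
    Integrable (fun k => ψ k • g k) μ := by
  have hS : MeasurableSet (tsupport ψ) := (isClosed_tsupport ψ).measurableSet
  obtain ⟨M, hM⟩ := hcs.exists_bound_of_continuousOn hg.continuousOn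
  have hind : (fun k => ψ k • g k) = ψ • (tsupport ψ).indicator g := by
    ext k
    by_cases hk : k ∈ tsupport ψ
    · simp [hk]
    · simp [image_eq_zero_of_notMem_tsupport hk]
  rw [hind]
  refine hψ.smul_bdd (max M 0) ((aestronglyMeasurable_indicator_iff hS).2
    (hg.continuousOn.aestronglyMeasurable_of_isCompact hcs hS)) (ae_of_all _ fun k => ?_)
  by_cases hk : k ∈ tsupport ψ
  · simpa [hk] using (hM k hk).trans (le_max_left M 0)
  · simp [hk]

variable {W : Xd → H →L[ℂ] H} (hWcont : ∀ u, Continuous fun k => W k u)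
  (hW : ∀ k u, ‖W k u‖ ≤ ‖u‖)
include hWcont hW

theorem exists_clm_eq_integral_smul {ψ : Xd → ℂ} (hψ : Integrable ψ μ)
    (hcs : HasCompactSupport ψ) : ∃ A : H →L[ℂ] H, ∀ u, A u = ∫ k, ψ k • W k u ∂μ := by
  have hint (u : H) : Integrable (fun k => ψ k • W k u) μ :=
    hψ.smul_continuous_of_hasCompactSupport hcs (hWcont u)
  refine ⟨LinearMap.mkContinuous
    { toFun := fun u => ∫ k, ψ k • W k u ∂μ
      map_add' := fun u v => by
        simp only [map_add, smul_add]
        exact integral_add (hint u) (hint v)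
      map_smul' := fun c u => by
        simp only [map_smul, smul_comm (ψ _) c, RingHom.id_apply]
        exact integral_smul c _ }
    (∫ k, ‖ψ k‖ ∂μ) fun u => ?_, fun u => rfl⟩
  calc ‖∫ k, ψ k • W k u ∂μ‖ ≤ ∫ k, ‖ψ k‖ * ‖u‖ ∂μ :=
        norm_integral_le_of_norm_le (hψ.norm.mul_const _)
          (ae_of_all _ fun k => by rw [norm_smul]; gcongr; exact hW k u)
    _ = (∫ k, ‖ψ k‖ ∂μ) * ‖u‖ := integral_mul_const _ _

theorem exists_isCompactOperator_eq_sum_integral {G P : Type*} [NormedAddCommGroup G]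
    [NormedSpace ℂ G] [NormedAddCommGroup P] [NormedSpace ℂ P] (e : G →L[ℂ] H)
    (hA : ∀ A ∈ integralOps μ W, IsCompactOperator (A ∘L e))
    {ψ : Xd → ℂ} (hψ : Integrable ψ μ) (hcs : HasCompactSupport ψ) {ι : Type*} [Fintype ι]
    {K : ι → Set Xd} (hK : ∀ i, MeasurableSet (K i)) (y : ι → P →L[ℂ] G) :
    ∃ T : P →L[ℂ] H, IsCompactOperator T ∧
      ∀ w, T w = ∑ i, ∫ k, (K i).indicator ψ k • W k (e (y i w)) ∂μ := by
  have hψK (i : ι) : Integrable ((K i).indicator ψ) μ ∧ HasCompactSupport ((K i).indicator ψ) :=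
    ⟨hψ.indicator (hK i), hcs.indicator _⟩
  choose A hAψ using fun i => exists_clm_eq_integral_smul hWcont hW (hψK i).1 (hψK i).2
  refine ⟨∑ i, (A i ∘L e) ∘L y i, ?_, fun w => by simp [hAψ]⟩
  exact Submodule.sum_mem (compactOperator (RingHom.id ℂ) P H) fun i _ =>
    (hA _ ⟨_, (hψK i).1, (hψK i).2, hAψ i⟩).comp_clm (y i)

theorem isCompactOperator_of_eq_integral_smul [CompleteSpace H] {G P : Type*}
    [NormedAddCommGroup G] [NormedSpace ℂ G] [NormedAddCommGroup P] [NormedSpace ℂ P]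
    (e : G →L[ℂ] H)
    (hA : ∀ A ∈ integralOps μ W, IsCompactOperator (A ∘L e))
    {ψ : Xd → ℂ} (hψ : Integrable ψ μ) (hcs : HasCompactSupport ψ) {c : Xd → P →L[ℂ] G}
    (hc : Continuous c) (F : P →L[ℂ] H) (hF : ∀ w, F w = ∫ k, ψ k • W k (e (c k w)) ∂μ) :
    IsCompactOperator F := by
  refine isCompactOperator_of_forall_exists_norm_sub_le ((∫ k, ‖ψ k‖ ∂μ) * ‖e‖) fun ε hε => ?_
  obtain ⟨n, p, K, hKm, hKd, hSK, hKc⟩ := exists_measurable_partition_dist_lt hcs hc hε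
  obtain ⟨T, hT, hTw⟩ :=
    exists_isCompactOperator_eq_sum_integral hWcont hW e hA hψ hcs hKm fun i => c (p i)
  refine ⟨T, hT, opNorm_le_bound _ (by positivity) fun w => ?_⟩
  have hx : Continuous fun k => W k (e (c k w)) :=
    continuous_apply_of_strongly_continuous hWcont hW
      (e.continuous.comp (hc.clm_apply continuous_const))
  have hint (i : Fin n) : Integrable (fun k => (K i).indicator ψ k • W k (e (c (p i) w))) μ :=
    (hψ.indicator (hKm i)).smul_continuous_of_hasCompactSupport
      (hcs.indicator _) (hWcont _)
  have hclose (i : Fin n) (k : Xd) (hk : k ∈ K i) :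
      ‖W k (e (c k w)) - W k (e (c (p i) w))‖ ≤ ‖e‖ * ε * ‖w‖ :=
    calc ‖W k (e (c k w)) - W k (e (c (p i) w))‖ = ‖W k (e ((c k - c (p i)) w))‖ := by
          rw [sub_apply, map_sub, map_sub]
      _ ≤ ‖e ((c k - c (p i)) w)‖ := hW k _
      _ ≤ ‖e‖ * (‖c k - c (p i)‖ * ‖w‖) := e.le_opNorm_of_le (le_opNorm _ _)
      _ ≤ ‖e‖ * ε * ‖w‖ := by
          rw [mul_assoc]
          gcongr
          exact (dist_eq_norm (c k) (c (p i)) ▸ hKc i k hk).le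
  rw [sub_apply, hF, hTw, ← integral_finsetSum _ fun i _ => hint i,
    ← integral_sub (hψ.smul_continuous_of_hasCompactSupport hcs hx)
      (integrable_finsetSum _ fun i _ => hint i)]
  calc _ ≤ ∫ k, ‖ψ k‖ * (‖e‖ * ε * ‖w‖) ∂μ :=
        norm_integral_le_of_norm_le (hψ.norm.mul_const _) (ae_of_all _
          (norm_smul_sub_sum_indicator_smul_le hKd ((subset_tsupport ψ).trans hSK) hclose))
    _ = (∫ k, ‖ψ k‖ ∂μ) * ‖e‖ * ε * ‖w‖ := by rw [integral_mul_const]; ring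

theorem isCompactOperator_comp_of_intertwining [CompleteSpace H] {G Q : Type*}
    [NormedAddCommGroup G] [NormedSpace ℂ G] [NormedAddCommGroup Q] [NormedSpace ℂ Q]
    [CompleteSpace Q] (e : G →L[ℂ] H)
    (hA : ∀ A ∈ integralOps μ W, IsCompactOperator (A ∘L e))
    {U : Xd → Q →L[ℂ] Q} (L : Q →L[ℂ] H) {C : Xd → Q →L[ℂ] G} (hC : Continuous C)
    (hLU : ∀ k w, L (U k w) = W k (e (C k w)))
    {A : Q →L[ℂ] Q} (hAU : A ∈ integralOps μ U) : IsCompactOperator (L ∘L A) := by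
  obtain ⟨ψ, hψ, hcs, hAU⟩ := hAU
  -- `k ↦ U k w` need not be Bochner integrable; if it fails to be for some `w`, the junk value
  -- `0` of the integral forces `A = 0`.
  rcases forall_integrable_or_eq_zero A (fun w k => ψ k • U k w)
    (fun w w' => by ext; simp [smul_add]) hAU with hint | rfl
  · refine isCompactOperator_of_eq_integral_smul hWcont hW e hA hψ hcs hC _ fun w => ?_
    rw [ContinuousLinearMap.comp_apply, hAU, ← L.integral_comp_comm (hint w)]
    simp [hLU]
  · simpa using isCompactOperator_zero

end IntegralOperators

section CompactOperators

variable {P E Q H : Type*} [NormedAddCommGroup P] [NormedSpace ℂ P] [NormedAddCommGroup E]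
  [NormedSpace ℂ E] [NormedAddCommGroup Q] [NormedSpace ℂ Q] [NormedAddCommGroup H]
  [NormedSpace ℂ H] [CompleteSpace H]

theorem isCompactOperator_comp_of_mem_closure (L : Q →L[ℂ] H) {s : Set (E →L[ℂ] Q)}
    (hs : ∀ A ∈ s, IsCompactOperator (L ∘L A)) {A : E →L[ℂ] Q} (hA : A ∈ closure s) :
    IsCompactOperator (L ∘L A) :=
  closure_minimal hs
    (isClosed_setOfPred_isCompactOperator.preimage (continuous_const.clm_comp continuous_id)) hA

theorem isCompactOperator_comp_comp_of_mem_B0l {M : Set (Q →L[ℂ] Q)} (L : Q →L[ℂ] H)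
    (hM : ∀ A ∈ M, IsCompactOperator (L ∘L A)) (R : P →L[ℂ] E) {c : E →L[ℂ] Q}
    (hc : c ∈ B0l M) : IsCompactOperator (L ∘L c ∘L R) := by
  let Φ : (E →L[ℂ] Q) →L[ℂ] P →L[ℂ] H := (compL ℂ P Q H L).comp ((compL ℂ P E Q).flip R)
  have hclosed :
      IsClosed ((compactOperator (RingHom.id ℂ) P H).comap Φ.toLinearMap : Set (E →L[ℂ] Q)) :=
    isClosed_setOfPred_isCompactOperator.preimage Φ.continuous
  refine closure_minimal (Submodule.span_le.2 ?_) hclosed hc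
  rintro _ ⟨A, hA, T, rfl⟩
  exact (hM A hA).comp_clm (T ∘L R)

end CompactOperators

section Resolvents

variable {P Q : Type*} [NormedAddCommGroup P] [NormedSpace ℂ P] [NormedAddCommGroup Q]
  [NormedSpace ℂ Q]

theorem isInvertible_of_bijective [CompleteSpace P] [CompleteSpace Q] {f : P →L[ℂ] Q}
    (hf : Bijective f) : f.IsInvertible :=
  ⟨.ofBijective f (LinearMap.ker_eq_bot.2 hf.1) (LinearMap.range_eq_top.2 hf.2), rfl⟩

theorem continuous_inverse_of_isInvertible {Y : Type*} [TopologicalSpace Y] [CompleteSpace P]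
    {S : Y → P →L[ℂ] Q} (hS : Continuous S) (hinv : ∀ k, (S k).IsInvertible) :
    Continuous fun k => (S k).inverse := by
  refine continuous_iff_continuousAt.2 fun k => ?_
  obtain ⟨σ, hσ⟩ := hinv k
  exact (hσ ▸ (contDiffAt_map_inverse (n := 0) σ).continuousAt).comp hS.continuousAt

theorem inverse_sub_inverse {f g : P →L[ℂ] Q} (hf : f.IsInvertible) (hg : g.IsInvertible) :
    g.inverse - f.inverse = g.inverse ∘L (f - g) ∘L f.inverse := by
  ext x
  simp [hf, hg]

theorem eq_comp_inverse_comp_of_forall_exists {G H : Type*} [NormedAddCommGroup G]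
    [NormedSpace ℂ G] [NormedAddCommGroup H] [NormedSpace ℂ H] {S : G →L[ℂ] Q}
    (hS : S.IsInvertible) (e : G →L[ℂ] H) (j : H →L[ℂ] Q) {R : H →L[ℂ] H}
    (hR : ∀ v, ∃ u, e u = R v ∧ S u = j v) : R = e ∘L S.inverse ∘L j := by
  ext v
  obtain ⟨u, hu, hSu⟩ := hR v
  rw [← hu, ContinuousLinearMap.comp_apply, ContinuousLinearMap.comp_apply, ← hSu,
    hS.inverse_apply_self]

end Resolvents

section Conjugation

variable {G H E : Type*} [NormedAddCommGroup G] [NormedSpace ℂ G] [NormedAddCommGroup H]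
  [InnerProductSpace ℂ H] [NormedAddCommGroup E] [NormedSpace ℂ E]

theorem precompAntiDual_comp_toAntiDual_comp (e : G →L[ℂ] H) {B : G →L[ℂ] G} {W : H →L[ℂ] H}
    (hW : ∀ x, ‖W x‖ = ‖x‖) (hB : ∀ u, e (B u) = W (e u)) :
    precompAntiDual B ∘L (toAntiDual e ∘L e) ∘L B = toAntiDual e ∘L e := by
  ext x y
  simpa [hB] using LinearIsometry.inner_map_map ⟨W.toLinearMap, hW⟩ (e y) (e x)

theorem apply_inverse_precompAntiDual_eq {S : G →L[ℂ] AntiDual G} (hS : S.IsInvertible)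
    (e : G →L[ℂ] H) (D : G →L[ℂ] E) (uG : (G →L[ℂ] G)ˣ) (uE : (E →L[ℂ] E)ˣ)
    {W : H →L[ℂ] H} (hW : ∀ x, e ((uG : G →L[ℂ] G) x) = W (e x)) (w : AntiDual E) :
    e (S.inverse (precompAntiDual D (precompAntiDual (↑uE⁻¹ : E →L[ℂ] E) w))) =
      W (e ((precompAntiDual (uG : G →L[ℂ] G) ∘L S ∘L (uG : G →L[ℂ] G)).inverse
        (precompAntiDual ((↑uE⁻¹ : E →L[ℂ] E) ∘L D ∘L (uG : G →L[ℂ] G)) w))) := by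
  have hS' : (precompAntiDual (uG : G →L[ℂ] G) ∘L S ∘L (uG : G →L[ℂ] G)).IsInvertible :=
    (isInvertible_precompAntiDual_unit uG).comp (hS.comp (isInvertible_coe_unit uG))
  rw [← hW]
  congr 1
  rw [hS.inverse_apply_eq]
  apply (isInvertible_precompAntiDual_unit uG).injective
  exact (hS'.self_apply_inverse _).symm

theorem resolvent_sub_resolvent (e : G →L[ℂ] H) (D : G →L[ℂ] E) {a b : E →L[ℂ] AntiDual E}
    {J : G →L[ℂ] AntiDual G} (j : H →L[ℂ] AntiDual G) (hSa : (divForm D a - J).IsInvertible)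
    (hSb : (divForm D b - J).IsInvertible) {Ra Rb : H →L[ℂ] H}
    (hRa : ∀ v, ∃ u, e u = Ra v ∧ (divForm D a - J) u = j v)
    (hRb : ∀ v, ∃ u, e u = Rb v ∧ (divForm D b - J) u = j v) :
    Rb - Ra = (e ∘L (divForm D b - J).inverse ∘L precompAntiDual D) ∘L (a - b) ∘L
      (D ∘L (divForm D a - J).inverse ∘L j) := by
  rw [eq_comp_inverse_comp_of_forall_exists hSa e j hRa,
    eq_comp_inverse_comp_of_forall_exists hSb e j hRb, ← comp_sub, ← sub_comp,
    inverse_sub_inverse hSa hSb, sub_sub_sub_cancel_right, divForm, divForm, ← comp_sub,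
    ← sub_comp]
  rfl

theorem continuous_inverse_conj_comp [CompleteSpace G] {Y : Type*} [TopologicalSpace Y]
    (e : G →L[ℂ] H) {D : G →L[ℂ] E} {b : E →L[ℂ] AntiDual E} {z : ℂ}
    (hS : (divForm D b - z • toAntiDual e ∘L e).IsInvertible) {uG : Y → (G →L[ℂ] G)ˣ}
    {uE : Y → (E →L[ℂ] E)ˣ} {W : Y → H →L[ℂ] H} (hW : ∀ k x, ‖W k x‖ = ‖x‖)
    (hWe : ∀ k x, e ((uG k : G →L[ℂ] G) x) = W k (e x))
    (hD : Continuous fun k => (↑(uE k)⁻¹ : E →L[ℂ] E) ∘L D ∘L (uG k : G →L[ℂ] G))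
    (hb : Continuous fun k => precompAntiDual (uE k : E →L[ℂ] E) ∘L b ∘L (uE k : E →L[ℂ] E)) :
    Continuous fun k => (precompAntiDual (uG k : G →L[ℂ] G) ∘L
      (divForm D b - z • toAntiDual e ∘L e) ∘L (uG k : G →L[ℂ] G)).inverse ∘L
        precompAntiDual ((↑(uE k)⁻¹ : E →L[ℂ] E) ∘L D ∘L (uG k : G →L[ℂ] G)) := by
  have hconj (k : Y) : precompAntiDual (uG k : G →L[ℂ] G) ∘L
      (divForm D b - z • toAntiDual e ∘L e) ∘L (uG k : G →L[ℂ] G) =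
      divForm ((↑(uE k)⁻¹ : E →L[ℂ] E) ∘L D ∘L (uG k : G →L[ℂ] G))
        (precompAntiDual (uE k : E →L[ℂ] E) ∘L b ∘L (uE k : E →L[ℂ] E)) -
        z • toAntiDual e ∘L e := by
    rw [sub_comp, comp_sub, smul_comp, comp_smul, precompAntiDual_comp_divForm_comp D b _ (uE k),
      precompAntiDual_comp_toAntiDual_comp e (hW k) (hWe k)]
  refine (continuous_inverse_of_isInvertible ?_ fun k => (isInvertible_precompAntiDual_unit _).comp
    (hS.comp (isInvertible_coe_unit _))).clm_comp (continuous_precompAntiDual.comp hD)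
  simp only [hconj]
  exact ((continuous_precompAntiDual.comp hD).clm_comp (hb.clm_comp hD)).sub continuous_const

end Conjugation

theorem stmt9_general {X : Type*} [TopologicalSpace X] [CommGroup X]
    [MeasurableSpace (PontryaginDual X)] [BorelSpace (PontryaginDual X)]
    (μ : Measure (PontryaginDual X))
    {G H E : Type*}
    [NormedAddCommGroup G] [InnerProductSpace ℂ G] [CompleteSpace G]
    [NormedAddCommGroup H] [InnerProductSpace ℂ H] [CompleteSpace H]
    [NormedAddCommGroup E] [InnerProductSpace ℂ E]
    -- `H` and `K` are Hilbert `X`-modules over the group `X` (unitary representations):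
    (WH : GroupRep (PontryaginDual X) H)
    (hWHuni : ∀ (k : PontryaginDual X) (u : H), ‖(↑(WH.V k) : H →L[ℂ] H) u‖ = ‖u‖)
    -- `(G, H)` is a stable Friedrichs `X`-module (`V_k G ⊆ G`, with induced representation
    -- `VG`), which is compact:
    (e : G →L[ℂ] H)
    (VG : GroupRep (PontryaginDual X) G)
    (hVG : ∀ (k : PontryaginDual X) (u : G),
      e ((↑(VG.V k) : G →L[ℂ] G) u) = (↑(WH.V k) : H →L[ℂ] H) (e u))
    (hcpt : ∀ A ∈ repMult WH μ, IsCompactOperator (⇑(A.comp e)))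
    -- `(E, K)` is a stable Friedrichs `X`-module:
    (VE : GroupRep (PontryaginDual X) E)
    -- `D ∈ B(G, E)` and `a, b ∈ B(E, E*)` are of class `C^u(Q)`:
    (D : G →L[ℂ] E) (hD : CuClass VG VE D)
    (a b : E →L[ℂ] AntiDual E)
    (hb : Continuous fun k : PontryaginDual X =>
      (precompAntiDual (↑(VE.V k) : E →L[ℂ] E)).comp (b.comp (↑(VE.V k) : E →L[ℂ] E)))
    -- `D*aD − z` and `D*bD − z` are bijective maps `G → G*`:
    (z : ℂ)
    (hbija : Function.Bijective
      ⇑((precompAntiDual D).comp (a.comp D) - z • (toAntiDual e).comp e))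
    (hbijb : Function.Bijective
      ⇑((precompAntiDual D).comp (b.comp D) - z • (toAntiDual e).comp e))
    -- `a − b ∈ B₀ˡ(E, E*)` for the canonical multiplier algebra of `E*` (built from the
    -- representation `k ↦ (V_{k⁻¹})*` of the dual group on `E*`):
    (hab : a - b ∈ B0l (H := E)
      (closure {A : AntiDual E →L[ℂ] AntiDual E | ∃ ψ : PontryaginDual X → ℂ,
        Integrable ψ μ ∧ HasCompactSupport ψ ∧
        ∀ w : AntiDual E, A w =
          ∫ k, ψ k • (precompAntiDual (↑(VE.V k⁻¹) : E →L[ℂ] E) w) ∂μ}))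
    -- the resolvents `(Δ_a − z)⁻¹` and `(Δ_b − z)⁻¹`:
    (Ra Rb : H →L[ℂ] H)
    (hRa : ∀ v : H, ∃ u : G, e u = Ra v ∧
      ((precompAntiDual D).comp (a.comp D)) u - z • ((toAntiDual e).comp e) u
        = toAntiDual e v)
    (hRb : ∀ v : H, ∃ u : G, e u = Rb v ∧
      ((precompAntiDual D).comp (b.comp D)) u - z • ((toAntiDual e).comp e) u
        = toAntiDual e v) :
    IsCompactOperator (⇑(Ra - Rb)) := by
  have hSa := isInvertible_of_bijective hbija
  have hSb := isInvertible_of_bijective hbijb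
  rw [← neg_sub, resolvent_sub_resolvent e D (toAntiDual e) hSa hSb hRa hRb]
  refine (isCompactOperator_comp_comp_of_mem_B0l _ (fun A hA =>
    isCompactOperator_comp_of_mem_closure _ (fun A hA => ?_) hA) _ hab).neg
  refine isCompactOperator_comp_of_intertwining (W := fun k => (WH.V k : H →L[ℂ] H))
    (U := fun k => precompAntiDual (↑(VE.V k⁻¹) : E →L[ℂ] E)) WH.strong_cont
    (fun k u => (hWHuni k u).le) e (fun A hA => hcpt A (subset_closure hA)) _
    (continuous_inverse_conj_comp e hSb hWHuni hVG hD hb) (fun k w => ?_) hA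
  rw [map_inv]
  exact apply_inverse_precompAntiDual_eq hSb e D (VG.V k) (VE.V k) (hVG k) w

/-- Stability of the essential spectrum for operators in divergence form
over stable Friedrichs `X`-modules over a locally compact non-compact abelian group:
if `D`, `a`, `b` are of class `C^u(Q)`, `D*aD − z` and `D*bD − z` are bijective
`G → G*`, and `a − b ∈ B₀ˡ(E, E*)`, then the resolvent difference
`(Δ_a − z)⁻¹ − (Δ_b − z)⁻¹` is compact. -/
theorem stmt9 {X : Type*} [TopologicalSpace X] [CommGroup X] [IsTopologicalGroup X]
    [LocallyCompactSpace X] [T2Space X] [NoncompactSpace X]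
    [MeasurableSpace (PontryaginDual X)] [BorelSpace (PontryaginDual X)]
    (μ : Measure (PontryaginDual X)) [μ.IsHaarMeasure]
    {G H E K : Type*}
    [NormedAddCommGroup G] [InnerProductSpace ℂ G] [CompleteSpace G]
    [NormedAddCommGroup H] [InnerProductSpace ℂ H] [CompleteSpace H]
    [NormedAddCommGroup E] [InnerProductSpace ℂ E] [CompleteSpace E]
    [NormedAddCommGroup K] [InnerProductSpace ℂ K] [CompleteSpace K]
    -- `H` and `K` are Hilbert `X`-modules over the group `X` (unitary representations):
    (WH : GroupRep (PontryaginDual X) H) (WK : GroupRep (PontryaginDual X) K)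
    (hWHuni : ∀ (k : PontryaginDual X) (u : H), ‖(↑(WH.V k) : H →L[ℂ] H) u‖ = ‖u‖)
    (hWKuni : ∀ (k : PontryaginDual X) (w : K), ‖(↑(WK.V k) : K →L[ℂ] K) w‖ = ‖w‖)
    -- `(G, H)` is a stable Friedrichs `X`-module (`V_k G ⊆ G`, with induced representation
    -- `VG`), which is compact:
    (e : G →L[ℂ] H) (he : Function.Injective ⇑e) (hd : DenseRange ⇑e)
    (VG : GroupRep (PontryaginDual X) G)
    (hVG : ∀ (k : PontryaginDual X) (u : G),
      e ((↑(VG.V k) : G →L[ℂ] G) u) = (↑(WH.V k) : H →L[ℂ] H) (e u))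
    (hcpt : ∀ A ∈ repMult WH μ, IsCompactOperator (⇑(A.comp e)))
    -- `(E, K)` is a stable Friedrichs `X`-module:
    (eE : E →L[ℂ] K) (heE : Function.Injective ⇑eE) (hdE : DenseRange ⇑eE)
    (VE : GroupRep (PontryaginDual X) E)
    (hVE : ∀ (k : PontryaginDual X) (u : E),
      eE ((↑(VE.V k) : E →L[ℂ] E) u) = (↑(WK.V k) : K →L[ℂ] K) (eE u))
    -- `D ∈ B(G, E)` and `a, b ∈ B(E, E*)` are of class `C^u(Q)`:
    (D : G →L[ℂ] E) (hD : CuClass VG VE D)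
    (a b : E →L[ℂ] AntiDual E)
    (ha : Continuous fun k : PontryaginDual X =>
      (precompAntiDual (↑(VE.V k) : E →L[ℂ] E)).comp (a.comp (↑(VE.V k) : E →L[ℂ] E)))
    (hb : Continuous fun k : PontryaginDual X =>
      (precompAntiDual (↑(VE.V k) : E →L[ℂ] E)).comp (b.comp (↑(VE.V k) : E →L[ℂ] E)))
    -- `D*aD − z` and `D*bD − z` are bijective maps `G → G*`:
    (z : ℂ)
    (hbija : Function.Bijective
      ⇑((precompAntiDual D).comp (a.comp D) - z • (toAntiDual e).comp e))
    (hbijb : Function.Bijective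
      ⇑((precompAntiDual D).comp (b.comp D) - z • (toAntiDual e).comp e))
    -- `a − b ∈ B₀ˡ(E, E*)` for the canonical multiplier algebra of `E*` (built from the
    -- representation `k ↦ (V_{k⁻¹})*` of the dual group on `E*`):
    (hab : a - b ∈ B0l (H := E)
      (closure {A : AntiDual E →L[ℂ] AntiDual E | ∃ ψ : PontryaginDual X → ℂ,
        Integrable ψ μ ∧ HasCompactSupport ψ ∧
        ∀ w : AntiDual E, A w =
          ∫ k, ψ k • (precompAntiDual (↑(VE.V k⁻¹) : E →L[ℂ] E) w) ∂μ}))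
    -- the resolvents `(Δ_a − z)⁻¹` and `(Δ_b − z)⁻¹`:
    (Ra Rb : H →L[ℂ] H)
    (hRa : ∀ v : H, ∃ u : G, e u = Ra v ∧
      ((precompAntiDual D).comp (a.comp D)) u - z • ((toAntiDual e).comp e) u
        = toAntiDual e v)
    (hRb : ∀ v : H, ∃ u : G, e u = Rb v ∧
      ((precompAntiDual D).comp (b.comp D)) u - z • ((toAntiDual e).comp e) u
        = toAntiDual e v) :
    IsCompactOperator (⇑(Ra - Rb)) :=
  stmt9_general μ WH hWHuni e VG hVG hcpt VE D hD a b hb z hbija hbijb hab Ra Rb hRa hRb
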